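/- Let S : ℝᵈ → ℝᵈ be a continuously differentiable involution (S ∘ S = id), π : ℝᵈ → [0, ∞) Lebesgue-integrable, J(z) := |det DS(z)|, α(z) := min{1, π(S(z))·J(z)/π(z)} for π(z) > 0 and α(z) := 1 otherwise, and P(z, ·) := α(z)·δ_{S(z)} + (1 − α(z))·δ_z. Then the measure π(z)dz is invariant under P: for every Borel set A ⊆ ℝᵈ, ∫_{ℝᵈ} P(z, A) π(z) dz = ∫_A π(z) dz. -/

import Mathlib

/-!
With `J z = |det DS(z)|`, the accepted flux `m z = α z * π z` equals `min (π z) (π (S z) * J z)`.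
Differentiating `S ∘ S = id` gives `J z * J (S z) = 1`, whence detailed balance
`J z * m (S z) = m z`. The change of variables `z ↦ S z` then shows that the accepted mass
leaving `A`, `∫ m z * 1_A(z)`, equals the accepted mass entering it, `∫ m z * 1_A(S z)`, so the
acceptance and rejection terms of `∫ P(z, A) π(z) dz` recombine to `∫_A π`.
-/

open MeasureTheory Set Function

theorem mul_min_eq_min_of_mul_eq_one {j j' p q : ℝ} (hj : 0 ≤ j) (hjj' : j * j' = 1) :
    j * min q (p * j') = min p (q * j) := by
  rw [mul_min_of_nonneg _ _ hj, min_comm, mul_left_comm, hjj', mul_one, mul_comm]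

theorem mul_eq_min_of_acceptance {a p q : ℝ} (hp : 0 ≤ p) (hq : 0 ≤ q)
    (ha : 0 < p → a = min 1 (q / p)) (ha1 : p = 0 → a = 1) :
    a * p = min p q := by
  rcases hp.eq_or_lt with hp0 | hp0
  · rw [ha1 hp0.symm, ← hp0, one_mul, min_eq_left hq]
  · rw [ha hp0, min_mul_of_nonneg _ _ hp0.le, one_mul, div_mul_cancel₀ _ hp0.ne']

section Involution

variable {E F : Type*} [NormedAddCommGroup E] [NormedSpace ℝ E] [NormedAddCommGroup F]
  [NormedSpace ℝ F] {S : E → E}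

theorem det_fderiv_mul_det_fderiv_of_involutive (hS : Differentiable ℝ S) (hinv : Involutive S)
    (z : E) : (fderiv ℝ S z).det * (fderiv ℝ S (S z)).det = 1 := by
  have hcomp : fderiv ℝ S (S z) ∘L fderiv ℝ S z = ContinuousLinearMap.id ℝ E := by
    rw [← fderiv_comp z (hS (S z)) (hS z), hinv.comp_self, fderiv_id]
  rw [mul_comm, ContinuousLinearMap.det, ContinuousLinearMap.det, ← LinearMap.det_comp,
    ← ContinuousLinearMap.toLinearMap_comp, hcomp, ContinuousLinearMap.coe_id, LinearMap.det_id]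

/-- In the paper's notation `metropolisFlux S π z = α(z) π(z)`, the density of accepted moves. -/
noncomputable def metropolisFlux (S : E → E) (π : E → ℝ) (z : E) : ℝ :=
  min (π z) (π (S z) * |(fderiv ℝ S z).det|)

theorem abs_det_fderiv_mul_metropolisFlux_of_involutive (hS : Differentiable ℝ S)
    (hinv : Involutive S) (π : E → ℝ) (z : E) :
    |(fderiv ℝ S z).det| * metropolisFlux S π (S z) = metropolisFlux S π z := by
  rw [metropolisFlux, metropolisFlux, hinv z]
  exact mul_min_eq_min_of_mul_eq_one (abs_nonneg _)
    (by rw [← abs_mul, det_fderiv_mul_det_fderiv_of_involutive hS hinv, abs_one])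

variable [FiniteDimensional ℝ E] [MeasurableSpace E] [BorelSpace E]
  (μ : Measure E) [μ.IsAddHaarMeasure]

theorem quasiMeasurePreserving_of_involutive (hS : Differentiable ℝ S) (hinv : Involutive S) :
    Measure.QuasiMeasurePreserving S μ μ := by
  refine ⟨hS.continuous.measurable, Measure.AbsolutelyContinuous.mk fun s hs hμs => ?_⟩
  rw [Measure.map_apply hS.continuous.measurable hs, ← hinv.image_eq_preimage_symm]
  exact addHaar_image_eq_zero_of_differentiableOn_of_addHaar_eq_zero μ hS.differentiableOn hμs

theorem integral_abs_det_fderiv_smul_comp_of_involutive (hS : Differentiable ℝ S)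
    (hinv : Involutive S) (f : E → F) :
    ∫ z, |(fderiv ℝ S z).det| • f (S z) ∂μ = ∫ z, f z ∂μ := by
  have := integral_image_eq_integral_abs_det_fderiv_smul μ MeasurableSet.univ
    (fun z _ => (hS z).hasFDerivAt.hasFDerivWithinAt) hinv.injective.injOn f
  rw [image_univ_of_surjective hinv.surjective, Measure.restrict_univ] at this
  exact this.symm

theorem integral_metropolisFlux_mul_comp_of_involutive (hS : Differentiable ℝ S)
    (hinv : Involutive S) (π g : E → ℝ) :
    ∫ z, metropolisFlux S π z * g (S z) ∂μ = ∫ z, metropolisFlux S π z * g z ∂μ := by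
  rw [← integral_abs_det_fderiv_smul_comp_of_involutive μ hS hinv
    (fun z => metropolisFlux S π z * g z)]
  congr 1 with z
  rw [smul_eq_mul, ← mul_assoc, abs_det_fderiv_mul_metropolisFlux_of_involutive hS hinv]

theorem integrable_metropolisFlux (hS : Differentiable ℝ S) (hinv : Involutive S) {π : E → ℝ}
    (hπ0 : ∀ z, 0 ≤ π z) (hπ : Integrable π μ) : Integrable (metropolisFlux S π) μ := by
  have hJ : AEStronglyMeasurable (fun z => |(fderiv ℝ S z).det|) μ :=
    (ContinuousLinearMap.continuous_det.measurable.comp (measurable_fderiv ℝ S)).abs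
      |>.aestronglyMeasurable
  have hπS := hπ.1.comp_quasiMeasurePreserving (quasiMeasurePreserving_of_involutive μ hS hinv)
  refine hπ.mono' (hπ.1.inf (hπS.mul hJ)) (.of_forall fun z => ?_)
  rw [metropolisFlux, Real.norm_of_nonneg (le_min (hπ0 z) (mul_nonneg (hπ0 _) (abs_nonneg _)))]
  exact min_le_left _ _

theorem integral_metropolis_involution_eq (hS : Differentiable ℝ S) (hinv : Involutive S)
    {π α g : E → ℝ} (hπ0 : ∀ z, 0 ≤ π z) (hπ : Integrable π μ)
    (hα : ∀ z, α z * π z = metropolisFlux S π z)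
    (hg : AEStronglyMeasurable g μ) {C : ℝ} (hgC : ∀ᵐ z ∂μ, ‖g z‖ ≤ C) :
    ∫ z, (α z * g (S z) + (1 - α z) * g z) * π z ∂μ = ∫ z, g z * π z ∂μ := by
  set m := metropolisFlux S π
  have hQMP := quasiMeasurePreserving_of_involutive μ hS hinv
  have hm := integrable_metropolisFlux μ hS hinv hπ0 hπ
  have hmgS : Integrable (fun z => m z * g (S z)) μ :=
    hm.mul_bdd (hg.comp_quasiMeasurePreserving hQMP) (hQMP.ae hgC)
  have hmg : Integrable (fun z => m z * g z) μ := hm.mul_bdd hg hgC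
  have hgπ : Integrable (fun z => g z * π z) μ := hπ.bdd_mul hg hgC
  have hrest : Integrable (fun z => g z * π z - m z * g z) μ := hgπ.sub hmg
  calc ∫ z, (α z * g (S z) + (1 - α z) * g z) * π z ∂μ
      = ∫ z, (m z * g (S z) + (g z * π z - m z * g z)) ∂μ := by
        congr 1 with z
        linear_combination (g (S z) - g z) * hα z
    _ = ∫ z, g z * π z ∂μ := by
        rw [integral_add hmgS hrest, integral_sub hgπ hmg,
          integral_metropolisFlux_mul_comp_of_involutive μ hS hinv]
        ring

end Involution

/-- **Invariance of `π(z)dz` under the Metropolis–Hastings kernel with deterministic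
involutive proposal.** With `S`, `π`, `J`, `α` as in the detailed-balance statement,
the measure `π(z)dz` is invariant: for every Borel `A`,
`∫ P(z, A) π(z) dz = ∫_A π(z) dz`. -/
theorem metropolis_involution_invariance
    (d : ℕ)
    (S : EuclideanSpace ℝ (Fin d) → EuclideanSpace ℝ (Fin d))
    (hS : ContDiff ℝ 1 S)
    (hinv : ∀ z, S (S z) = z)
    (π : EuclideanSpace ℝ (Fin d) → ℝ)
    (hπ0 : ∀ z, 0 ≤ π z)
    (hπint : MeasureTheory.Integrable π)
    (J : EuclideanSpace ℝ (Fin d) → ℝ)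
    (hJ : ∀ z, J z = |LinearMap.det ((fderiv ℝ S z).toLinearMap)|)
    (α : EuclideanSpace ℝ (Fin d) → ℝ)
    (hα : ∀ z, 0 < π z → α z = min 1 (π (S z) * J z / π z))
    (hα1 : ∀ z, π z = 0 → α z = 1) :
    ∀ A : Set (EuclideanSpace ℝ (Fin d)), MeasurableSet A →
      (∫ z,
        (α z * A.indicator (fun _ => (1:ℝ)) (S z)
          + (1 - α z) * A.indicator (fun _ => (1:ℝ)) z) * π z)
      = ∫ z in A, π z := by
  intro A hA
  have hαπ z : α z * π z = metropolisFlux S π z := by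
    rw [metropolisFlux, ← hJ z]
    exact mul_eq_min_of_acceptance (hπ0 z) (mul_nonneg (hπ0 _) (hJ z ▸ abs_nonneg _))
      (hα z) (hα1 z)
  rw [integral_metropolis_involution_eq volume (hS.differentiable one_ne_zero) hinv hπ0 hπint
      hαπ (measurable_const.indicator hA).aestronglyMeasurable
      (.of_forall fun z => (norm_indicator_le_norm_self _ z).trans_eq norm_one),
    ← integral_indicator hA]
  congr 1 with z
  by_cases hz : z ∈ A <;> simp [hz]
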